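/- arXiv:1310.4372 — 12 statements merged into one kernel-verified Lean document; each statement's English description precedes it below -/
import Mathlib

section
/- Let M be an m×n real matrix with rows s_1,...,s_m such that the strict system {⟨s_i, x⟩ > 0 for all i} has no solution. Let E ⊆ {1,...,m} be a set of minimum cardinality such that the mixed system {⟨s_i, x⟩ ≥ 0 for i ∈ E, ⟨s_j, x⟩ > 0 for j ∉ E} has a solution. Then every solution of this mixed system also satisfies ⟨s_i, x⟩ = 0 for all i ∈ E. -/
open Matrix Finset

theorem stmt_0 {m n : ℕ} (M : Matrix (Fin m) (Fin n) ℝ)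
    (hinfeas : ¬ ∃ x : Fin n → ℝ, ∀ i, 0 < M.mulVec x i)
    (E : Finset (Fin m))
    (hfeas : ∃ x : Fin n → ℝ, (∀ i ∈ E, 0 ≤ M.mulVec x i) ∧ (∀ j ∉ E, 0 < M.mulVec x j))
    (hmin : ∀ E' : Finset (Fin m),
      (∃ x : Fin n → ℝ, (∀ i ∈ E', 0 ≤ M.mulVec x i) ∧ (∀ j ∉ E', 0 < M.mulVec x j)) →
      E.card ≤ E'.card) :
    ∀ x : Fin n → ℝ,
      ((∀ i ∈ E, 0 ≤ M.mulVec x i) ∧ (∀ j ∉ E, 0 < M.mulVec x j)) →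
      ∀ i ∈ E, M.mulVec x i = 0 := by
  rintro x ⟨hge, hgt⟩ i hi
  by_contra hne
  have hpos : 0 < M.mulVec x i := lt_of_le_of_ne (hge i hi) (Ne.symm hne)
  have := hmin (E.erase i) ⟨x, fun j hj => hge j (Finset.mem_of_mem_erase hj),
    fun j hj => by
      by_cases hjE : j ∈ E
      · have : j = i := by
          by_contra h
          exact hj (Finset.mem_erase.mpr ⟨h, hjE⟩)
        simpa [this] using hpos
      · exact hgt j hjE⟩
  have hlt : (E.erase i).card < E.card := Finset.card_erase_lt_of_mem hi
  omega
end

section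
/- (Gordan's Theorem) For a real m×n matrix M, the system Mx > 0 (all coordinates strictly positive) has a solution x ∈ ℝⁿ if and only if the dual system Mᵀy = 0, y ≥ 0, y ≠ 0 has no solution y ∈ ℝᵐ. -/
open Matrix

theorem stmt_1 {m n : ℕ} (M : Matrix (Fin m) (Fin n) ℝ) :
    (∃ x : Fin n → ℝ, ∀ i, 0 < M.mulVec x i) ↔
      ¬ ∃ y : Fin m → ℝ, Mᵀ.mulVec y = 0 ∧ (∀ i, 0 ≤ y i) ∧ y ≠ 0 := by
  constructor
  · rintro ⟨x, hx⟩ ⟨y, hMy, hy, hy0⟩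
    have hdot : y ⬝ᵥ M.mulVec x = 0 := by
      rw [Matrix.dotProduct_mulVec, ← Matrix.mulVec_transpose, hMy]
      simp
    have hpos : 0 < y ⬝ᵥ M.mulVec x := by
      obtain ⟨i, hi⟩ := Function.ne_iff.mp hy0
      have hi' : 0 < y i := lt_of_le_of_ne (hy i) (Ne.symm (by simpa using hi))
      apply Finset.sum_pos' (fun j _ => mul_nonneg (hy j) (hx j).le)
      exact ⟨i, Finset.mem_univ i, mul_pos hi' (hx i)⟩
    exact absurd hdot hpos.ne'
  · intro h
    by_contra hx
    have h0 : (0 : Fin n → ℝ) ∉ convexHull ℝ (Set.range M) := by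
      intro h0
      change (0 : Fin n → ℝ) ∈ convexHull ℝ (Set.range (fun i => M i)) at h0
      rw [convexHull_range_eq_exists_affineCombination] at h0
      obtain ⟨s, w, hw0, hw1, hw⟩ := h0
      rw [Finset.affineCombination_eq_linear_combination _ _ _ hw1] at hw
      apply h
      refine ⟨fun i => if i ∈ s then w i else 0, ?_, ?_, ?_⟩
      · funext j
        have h1 := congrFun hw j
        simp only [Finset.sum_apply, Pi.smul_apply, smul_eq_mul, Pi.zero_apply] at h1
        simp only [Matrix.mulVec, dotProduct, Matrix.transpose_apply, Pi.zero_apply]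
        have h2 : (∑ i, M i j * (if i ∈ s then w i else 0)) = ∑ i ∈ s, w i * M i j := by
          simp [mul_ite, Finset.sum_ite_mem, mul_comm]
        rw [h2]; exact h1
      · intro i
        by_cases hi : i ∈ s
        · simpa [hi] using hw0 i hi
        · simp [hi]
      · intro hy0
        have : ∑ i ∈ s, w i = 0 := by
          rw [← Finset.sum_congr rfl (fun i hi => by
            simpa [hi] using (congrFun hy0 i).symm)]
          simp
        rw [hw1] at this; norm_num at this
    have hconv : Convex ℝ (convexHull ℝ (Set.range M)) := convex_convexHull ℝ _
    have hcl : IsClosed (convexHull ℝ (Set.range M)) :=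
      ((Set.finite_range M).isCompact_convexHull (𝕜 := ℝ)).isClosed
    obtain ⟨f, u, hfu, huf⟩ := geometric_hahn_banach_point_closed hconv hcl h0
    refine absurd ?_ hx
    refine ⟨fun j => f (Pi.single j 1), fun i => ?_⟩
    have hMi : u < f (M i) := huf (M i) (subset_convexHull ℝ _ ⟨i, rfl⟩)
    have hu : 0 < u := by simpa using hfu
    have : M.mulVec (fun j => f (Pi.single j 1)) i = f (M i) := by
      rw [pi_eq_sum_univ (M i), map_sum]
      simp only [Matrix.mulVec, dotProduct, ContinuousLinearMap.map_smul, smul_eq_mul]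
      refine Finset.sum_congr rfl fun x _ => ?_
      congr 1
      exact congrArg f (funext fun j => by simp [Pi.single_apply, eq_comm])
    rw [this]; exact hu.trans hMi
end

section
/- (Extension of Gordan's theorem) Let M ∈ ℝ^{m×n} with rows s_1,...,s_m and E ⊆ [m]. The system {⟨s_i, x⟩ = 0 for i ∈ E, ⟨s_j, x⟩ > 0 for j ∉ E} has a solution x ∈ ℝⁿ if and only if there is no y ∈ ℝᵐ with Mᵀy = 0, y_i ≥ 0 for all i ∉ E, and y_j > 0 for at least one j ∉ E. -/
open Matrix
open Pointwise

theorem stmt_2 {m n : ℕ} (M : Matrix (Fin m) (Fin n) ℝ) (E : Set (Fin m)) :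
    (∃ x : Fin n → ℝ, (∀ i ∈ E, M.mulVec x i = 0) ∧ (∀ j ∉ E, 0 < M.mulVec x j)) ↔
      ¬ ∃ y : Fin m → ℝ, Mᵀ.mulVec y = 0 ∧ (∀ i ∉ E, 0 ≤ y i) ∧ (∃ j ∉ E, 0 < y j) := by
  classical
  constructor
  · rintro ⟨x, hE, hNE⟩ ⟨y, hy0, hynn, j, hjE, hyj⟩
    -- key identity: ∑ i, y i * (M.mulVec x) i = ∑ k, (Mᵀ.mulVec y) k * x k = 0
    have key : ∑ i, y i * M.mulVec x i = ∑ k, Mᵀ.mulVec y k * x k := by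
      simp only [mulVec, dotProduct, transpose_apply, Finset.mul_sum, Finset.sum_mul]
      rw [Finset.sum_comm]
      apply Finset.sum_congr rfl; intro k _
      apply Finset.sum_congr rfl; intro i _
      ring
    have hz : ∑ i, y i * M.mulVec x i = 0 := by
      rw [key, hy0]; simp
    have hpos : 0 < ∑ i, y i * M.mulVec x i := by
      apply Finset.sum_pos'
      · intro i _
        by_cases hi : i ∈ E
        · rw [hE i hi, mul_zero]
        · exact mul_nonneg (hynn i hi) (hNE i hi).le
      · exact ⟨j, Finset.mem_univ j, mul_pos hyj (hNE j hjE)⟩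
    exact absurd hz (ne_of_gt hpos)
  · intro hdual
    by_cases hEall : ∀ j : Fin m, j ∈ E
    · refine ⟨0, ?_, ?_⟩
      · intro i _; simp [Matrix.mulVec_zero]
      · intro j hj; exact absurd (hEall j) hj
    · push_neg at hEall
      haveI : DecidablePred (· ∈ E) := Classical.decPred _
      haveI hne : Nonempty {j : Fin m // j ∉ E} := by
        obtain ⟨j, hj⟩ := hEall; exact ⟨⟨j, hj⟩⟩
      set ι := {j : Fin m // j ∉ E} with hι
      set κ := {i : Fin m // i ∈ E} with hκ
      -- linear map
      let φ : (ι → ℝ) →ₗ[ℝ] (Fin n → ℝ) :=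
        { toFun := fun l => ∑ j : ι, l j • M (j : Fin m)
          map_add' := by
            intro a b
            simp [add_smul, Finset.sum_add_distrib]
          map_smul' := by
            intro c a
            simp [smul_smul, Finset.smul_sum] }
      let A : Set (Fin n → ℝ) := φ '' stdSimplex ℝ ι
      let W : Submodule ℝ (Fin n → ℝ) := Submodule.span ℝ (Set.range fun i : κ => M (i : Fin m))
      let C : Set (Fin n → ℝ) := A + (W : Set (Fin n → ℝ))
      have hAconv : Convex ℝ A := (convex_stdSimplex ℝ ι).linear_image φ
      have hAcomp : IsCompact A := (isCompact_stdSimplex ℝ ι).image φ.continuous_of_finiteDimensional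
      have hCconv : Convex ℝ C := hAconv.add W.convex
      have hCclosed : IsClosed C :=
        IsClosed.add_left_of_isCompact W.closed_of_finiteDimensional hAcomp
      have h0C : (0 : Fin n → ℝ) ∉ C := by
        rintro ⟨a, ha, w, hw, haw⟩
        obtain ⟨l, hl, rfl⟩ := ha
        obtain ⟨c, hc⟩ := Submodule.mem_span_range_iff_exists_fun ℝ |>.mp hw
        set y : Fin m → ℝ := fun i => if h : i ∈ E then c ⟨i, h⟩ else l ⟨i, h⟩ with hy
        apply hdual
        refine ⟨y, ?_, ?_, ?_⟩
        · have hsum : ∑ i, y i • M i = 0 := by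
            rw [← Fintype.sum_subtype_add_sum_subtype (· ∈ E) (fun i => y i • M i)]
            have h1 : ∑ i : κ, y (i : Fin m) • M (i : Fin m) = w := by
              rw [← hc]; apply Finset.sum_congr rfl
              intro i _; congr 1
              simp [hy, i.2]
            have h2 : ∑ j : ι, y (j : Fin m) • M (j : Fin m) = φ l := by
              apply Finset.sum_congr rfl
              intro j _; congr 1
              simp [hy, j.2]
            rw [h1, h2, add_comm]; exact haw
          ext k
          have := congrFun hsum k
          simpa [mulVec, dotProduct, transpose_apply, Finset.sum_apply, mul_comm] using this
        · intro i hi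
          simp only [hy, dif_neg hi]
          exact hl.1 ⟨i, hi⟩
        · by_contra hcon
          push_neg at hcon
          have : ∑ j : ι, l j ≤ 0 := by
            apply Finset.sum_nonpos
            intro j _
            have := hcon (j : Fin m) j.2
            simpa [hy, dif_neg j.2] using this
          rw [hl.2] at this; linarith
      obtain ⟨f, u, hfu, hu0⟩ := geometric_hahn_banach_closed_point hCconv hCclosed h0C
      have hu : u < 0 := by simpa using hu0
      -- vertices are in A
      have hvert : ∀ j : ι, M (j : Fin m) ∈ A := by
        intro j
        refine ⟨fun k => if k = j then 1 else 0, ⟨?_, ?_⟩, ?_⟩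
        · intro k; dsimp only; split <;> norm_num
        · rw [Finset.sum_eq_single j] <;> simp +contextual
        · simp only [φ, LinearMap.coe_mk, AddHom.coe_mk]
          rw [Finset.sum_eq_single j] <;> simp +contextual
      have hAC : ∀ a ∈ A, a ∈ C := fun a ha => ⟨a, ha, 0, W.zero_mem, add_zero a⟩
      obtain ⟨j₀⟩ := hne
      have ha₀ : M (j₀ : Fin m) ∈ A := hvert j₀
      -- f vanishes on rows in E
      have hfE : ∀ i ∈ E, f (M i) = 0 := by
        intro i hi
        by_contra hne0
        have hmem : ∀ t : ℝ, M (j₀ : Fin m) + t • M i ∈ C := by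
          intro t
          exact ⟨M (j₀ : Fin m), ha₀, t • M i,
            W.smul_mem t (Submodule.subset_span ⟨⟨i, hi⟩, rfl⟩), rfl⟩
        set t := (1 - f (M (j₀ : Fin m))) / f (M i) with ht
        have := hfu _ (hmem t)
        rw [map_add, ContinuousLinearMap.map_smul] at this
        simp only [smul_eq_mul, ht] at this
        rw [div_mul_cancel₀ _ hne0] at this
        linarith
      -- f negative on rows outside E
      have hfNE : ∀ j ∉ E, f (M j) < 0 := by
        intro j hj
        have := hfu _ (hAC _ (hvert ⟨j, hj⟩))
        linarith
      -- construct x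
      refine ⟨fun k => -(f fun k' => if k = k' then 1 else 0), ?_, ?_⟩
      all_goals
        have hMx : ∀ i : Fin m, M.mulVec (fun k => -(f fun k' => if k = k' then 1 else 0)) i
            = -(f (M i)) := by
          intro i
          have hrow : M i = ∑ k, (M i k) • fun k' => if k = k' then (1:ℝ) else 0 :=
            pi_eq_sum_univ (M i)
          calc M.mulVec (fun k => -(f fun k' => if k = k' then 1 else 0)) i
              = ∑ k, M i k * -(f fun k' => if k = k' then (1:ℝ) else 0) := rfl
            _ = -(∑ k, M i k * (f fun k' => if k = k' then (1:ℝ) else 0)) := by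
                rw [← Finset.sum_neg_distrib]; apply Finset.sum_congr rfl; intros; ring
            _ = -(f (M i)) := by
                congr 1
                conv_rhs => rw [hrow]
                rw [map_sum]
                apply Finset.sum_congr rfl
                intro k _
                rw [ContinuousLinearMap.map_smul]; simp [mul_comm]
      · intro i hi
        rw [hMx i, hfE i hi, neg_zero]
      · intro j hj
        rw [hMx j]
        linarith [hfNE j hj]
end

section
/- Let M ∈ ℝ^{m×n} and define E(M) as the intersection of all sets E ⊆ [m] such that the system {⟨s_i,x⟩ = 0 for i ∈ E, ⟨s_j,x⟩ > 0 for j ∉ E} is feasible. Then the system {⟨s_i,x⟩ = 0 for i ∈ E(M), ⟨s_j,x⟩ > 0 for j ∉ E(M)} is itself feasible. -/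
open Matrix

theorem stmt_3 {m n : ℕ} (M : Matrix (Fin m) (Fin n) ℝ)
    (EM : Set (Fin m))
    (hEM : EM = ⋂₀ {E : Set (Fin m) |
      ∃ x : Fin n → ℝ, (∀ i ∈ E, M.mulVec x i = 0) ∧ (∀ j ∉ E, 0 < M.mulVec x j)}) :
    ∃ x : Fin n → ℝ, (∀ i ∈ EM, M.mulVec x i = 0) ∧ (∀ j ∉ EM, 0 < M.mulVec x j) := by
  classical
  -- For each j ∉ EM, a witness vector
  have hwit : ∀ j : Fin m, j ∉ EM → ∃ x : Fin n → ℝ,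
      (∀ i ∈ EM, M.mulVec x i = 0) ∧ (∀ k, 0 ≤ M.mulVec x k) ∧ 0 < M.mulVec x j := by
    intro j hj
    rw [hEM, Set.mem_sInter] at hj
    push_neg at hj
    obtain ⟨E, hE, hjE⟩ := hj
    obtain ⟨x, hx1, hx2⟩ := hE
    refine ⟨x, ?_, ?_, hx2 j hjE⟩
    · intro i hi
      have : i ∈ E := by
        rw [hEM] at hi
        exact hi E ⟨x, hx1, hx2⟩
      exact hx1 i this
    · intro k
      by_cases hk : k ∈ E
      · exact le_of_eq (hx1 k hk).symm
      · exact le_of_lt (hx2 k hk)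
  choose f hf0 hfnn hfpos using hwit
  set g : Fin m → (Fin n → ℝ) := fun j => if h : j ∉ EM then f j h else 0 with hg
  refine ⟨∑ j, g j, ?_, ?_⟩
  all_goals
    have hsum : ∀ i, M.mulVec (∑ j, g j) i = ∑ j, M.mulVec (g j) i := by
      intro i
      rw [show M.mulVec (∑ j, g j) = ∑ j, M.mulVec (g j) from map_sum M.mulVecLin g _]
      simp
  · intro i hi
    rw [hsum]
    apply Finset.sum_eq_zero
    intro j _
    by_cases h : j ∉ EM
    · simp only [hg, dif_pos h]
      exact hf0 j h i hi
    · push_neg at h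
      simp [hg, h, Matrix.mulVec_zero]
  · intro j hj
    rw [hsum]
    apply Finset.sum_pos'
    · intro k _
      by_cases h : k ∉ EM
      · simp only [hg, dif_pos h]
        exact hfnn k h j
      · push_neg at h
        simp [hg, h, Matrix.mulVec_zero]
    · refine ⟨j, Finset.mem_univ j, ?_⟩
      simp only [hg, dif_pos hj]
      exact hfpos j hj
end

section
/- Let M ∈ ℝ^{m×n}, such that the strict system Mx > 0 is infeasible. If y₀ is any solution of the dual system Mᵀy = 0, y ≥ 0, y ≠ 0, and E₀ is the set of indices where y₀ is strictly positive, then every E ⊆ [m] for which the system {⟨s_i,x⟩ = 0 for i ∈ E, ⟨s_j,x⟩ > 0 for j ∉ E} is feasible must contain E₀. -/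
open Matrix

theorem stmt_4 {m n : ℕ} (M : Matrix (Fin m) (Fin n) ℝ)
    (hinfeas : ¬ ∃ x : Fin n → ℝ, ∀ i, 0 < M.mulVec x i)
    (y₀ : Fin m → ℝ) (hdual : Mᵀ.mulVec y₀ = 0) (hnonneg : ∀ i, 0 ≤ y₀ i) (hne : y₀ ≠ 0)
    (E : Set (Fin m))
    (hfeas : ∃ x : Fin n → ℝ, (∀ i ∈ E, M.mulVec x i = 0) ∧ (∀ j ∉ E, 0 < M.mulVec x j)) :
    {i : Fin m | 0 < y₀ i} ⊆ E := by
  obtain ⟨x, hE, hEc⟩ := hfeas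
  intro i hi
  by_contra hiE
  have hsum : y₀ ⬝ᵥ M.mulVec x = 0 := by
    rw [Matrix.dotProduct_mulVec, ← Matrix.mulVec_transpose, hdual]
    simp
  have hterm : ∀ j, 0 ≤ y₀ j * M.mulVec x j := by
    intro j
    by_cases hj : j ∈ E
    · simp [hE j hj]
    · exact mul_nonneg (hnonneg j) (hEc j hj).le
  have hpos : 0 < y₀ i * M.mulVec x i := mul_pos hi (hEc i hiE)
  have : 0 < y₀ ⬝ᵥ M.mulVec x :=
    Finset.sum_pos' (fun j _ => hterm j) ⟨i, Finset.mem_univ i, hpos⟩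
  linarith
end

section
/- Let Q = ∩_{i∈I} (Π_i⁺ + t_i) be a full-dimensional polyhedron obtained by translating the halfspaces defining a cone K = ∩_{i∈I} Π_i⁺, where each Π_i is a linear hyperplane through the origin. Define the reverse polyhedron Q⁻ = ∩_{i∈I} (Π_i⁻ + t_i). Then for any p ∈ Q⁻, any convex cone C with apex at the origin, and writing C_K = C ∩ K, we have (C_K + p) ∩ Q ⊇ (C + p) ∩ Q. -/
open Matrix

theorem stmt_7 {d : ℕ} {I : Type*}
    (u : I → (Fin d → ℝ)) (t : I → (Fin d → ℝ))
    (Q : Set (Fin d → ℝ)) (hQ : Q = {x | ∀ i, 0 ≤ u i ⬝ᵥ (x - t i)})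
    (hQfull : (interior Q).Nonempty)
    (Qrev : Set (Fin d → ℝ)) (hQrev : Qrev = {x | ∀ i, u i ⬝ᵥ (x - t i) ≤ 0})
    (K : Set (Fin d → ℝ)) (hK : K = {x | ∀ i, 0 ≤ u i ⬝ᵥ x})
    (p : Fin d → ℝ) (hp : p ∈ Qrev)
    (C : Set (Fin d → ℝ)) (hCconv : Convex ℝ C)
    (hCcone : ∀ x ∈ C, ∀ r : ℝ, 0 ≤ r → r • x ∈ C) :
    ((fun c => c + p) '' C) ∩ Q ⊆ ((fun c => c + p) '' (C ∩ K)) ∩ Q := by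
  rintro x ⟨⟨c, hc, rfl⟩, hxQ⟩
  subst hQ hQrev hK
  refine ⟨⟨c, ⟨hc, fun i => ?_⟩, rfl⟩, hxQ⟩
  have h1 : 0 ≤ u i ⬝ᵥ (c + p - t i) := hxQ i
  have h2 : u i ⬝ᵥ (p - t i) ≤ 0 := hp i
  have : c = (c + p - t i) - (p - t i) := by abel
  rw [this, dotProduct_sub]
  linarith
end

section
/- Let Q be a full-dimensional polyhedron Q = ∩_{i∈I}(Π_i⁺ + t_i), K = ∩_{i∈I} Π_i⁺ the corresponding cone through the origin, G a finite family of cones covering ℝᵈ with translation points σ(C) for C ∈ G (i.e., ∪_{C∈G}(C + σ(C)) = ℝᵈ), and suppose all points σ(C) lie in the reverse polyhedron Q⁻ = ∩_{i∈I}(Π_i⁻ + t_i). Then the restricted cones C ∩ K translated by the same points cover Q: ∪_{C∈G}((C ∩ K) + σ(C)) ⊇ Q. -/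
open Matrix

theorem stmt_8 {d : ℕ} {I ι : Type*} [Fintype ι]
    (u : I → (Fin d → ℝ)) (t : I → (Fin d → ℝ))
    (Q : Set (Fin d → ℝ)) (hQ : Q = {x | ∀ i, 0 ≤ u i ⬝ᵥ (x - t i)})
    (hQfull : (interior Q).Nonempty)
    (Qrev : Set (Fin d → ℝ)) (hQrev : Qrev = {x | ∀ i, u i ⬝ᵥ (x - t i) ≤ 0})
    (K : Set (Fin d → ℝ)) (hK : K = {x | ∀ i, 0 ≤ u i ⬝ᵥ x})
    (C : ι → Set (Fin d → ℝ))
    (hCcone : ∀ j, ∀ x ∈ C j, ∀ r : ℝ, 0 ≤ r → r • x ∈ C j)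
    (σ : ι → (Fin d → ℝ))
    (hσ : ∀ j, σ j ∈ Qrev)
    (hcover : (⋃ j, (fun c => c + σ j) '' (C j)) = Set.univ) :
    Q ⊆ ⋃ j, (fun c => c + σ j) '' (C j ∩ K) := by
  subst hQ hQrev hK
  intro x hx
  have hx' : x ∈ ⋃ j, (fun c => c + σ j) '' (C j) :=
    Set.eq_univ_iff_forall.mp hcover x
  obtain ⟨j, c, hc, rfl⟩ := Set.mem_iUnion.mp hx'
  refine Set.mem_iUnion.mpr ⟨j, c, ⟨hc, ?_⟩, rfl⟩
  intro i
  have h1 := hx i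
  have h2 := hσ j i
  have hceq : c = (c + σ j - t i) - (σ j - t i) := by
    funext k; simp
  rw [hceq, dotProduct_sub]
  simp only [Set.mem_setOf_eq] at h1 h2
  linarith
end

section
/- Let S ⊂ ℝᵈ be a finite set of points and Q a finite set of sites with weights w : Q → ℝ. If an assignment σ : S → Q satisfies σ(b) ∈ argmin_{q∈Q} (‖b − q‖² − w(q)) for every b ∈ S (i.e., σ is induced by the power diagram of Q), then σ minimizes Σ_{b∈S} ‖b − τ(b)‖² among all assignments τ : S → Q satisfying |τ⁻¹(q)| = |σ⁻¹(q)| for all q ∈ Q. -/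
open Finset Classical in

theorem stmt_9 {d : ℕ}
    (S Q : Finset (EuclideanSpace ℝ (Fin d))) (w : EuclideanSpace ℝ (Fin d) → ℝ)
    (σ : EuclideanSpace ℝ (Fin d) → EuclideanSpace ℝ (Fin d))
    (hσQ : ∀ b ∈ S, σ b ∈ Q)
    (hpower : ∀ b ∈ S, ∀ q ∈ Q, dist b (σ b) ^ 2 - w (σ b) ≤ dist b q ^ 2 - w q)
    (τ : EuclideanSpace ℝ (Fin d) → EuclideanSpace ℝ (Fin d))
    (hτQ : ∀ b ∈ S, τ b ∈ Q)
    (hfibers : ∀ q ∈ Q, (S.filter (fun b => τ b = q)).card = (S.filter (fun b => σ b = q)).card) :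
    ∑ b ∈ S, dist b (σ b) ^ 2 ≤ ∑ b ∈ S, dist b (τ b) ^ 2 := by
  have hw : ∑ b ∈ S, w (σ b) = ∑ b ∈ S, w (τ b) := by
    rw [← Finset.sum_fiberwise_of_maps_to hσQ (fun b => w (σ b)),
        ← Finset.sum_fiberwise_of_maps_to hτQ (fun b => w (τ b))]
    refine Finset.sum_congr rfl fun q hq => ?_
    have h1 : ∑ b ∈ S.filter (fun b => σ b = q), w (σ b)
        = (S.filter (fun b => σ b = q)).card • w q := by
      rw [← Finset.sum_const]
      exact Finset.sum_congr rfl fun b hb => by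
        rw [(Finset.mem_filter.mp hb).2]
    have h2 : ∑ b ∈ S.filter (fun b => τ b = q), w (τ b)
        = (S.filter (fun b => τ b = q)).card • w q := by
      rw [← Finset.sum_const]
      exact Finset.sum_congr rfl fun b hb => by
        rw [(Finset.mem_filter.mp hb).2]
    rw [h1, h2, hfibers q hq]
  have key : ∑ b ∈ S, (dist b (σ b) ^ 2 - w (σ b))
      ≤ ∑ b ∈ S, (dist b (τ b) ^ 2 - w (τ b)) :=
    Finset.sum_le_sum fun b hb => hpower b hb (τ b) (hτQ b hb)
  have := key
  rw [Finset.sum_sub_distrib, Finset.sum_sub_distrib, hw] at this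
  linarith
end

section
/- Let V be a finite set, h : V × V → ℝᵈ a function with h(v,u) = −h(u,v) for all u,v (a directional graph). Suppose there exists a drawing, i.e., an injective map π : V → ℝᵈ such that whenever h(u,v) ≠ 0 there is λ_{uv} > 0 with π(v) − π(u) = λ_{uv} · h(v,u). Then for every finite set P ⊂ ℝᵈ with |P| = |V| there exists a bijection σ : V → P with ⟨h(v,u), σ(v) − σ(u)⟩ ≥ 0 for all u,v ∈ V. -/
open Matrix

theorem stmt_10 {d : ℕ} {V : Type*} [Fintype V]
    (h : V → V → (Fin d → ℝ)) (hanti : ∀ u v, h v u = -h u v)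
    (π : V → (Fin d → ℝ)) (hπ : Function.Injective π)
    (hdraw : ∀ u v, h u v ≠ 0 → ∃ lam : ℝ, 0 < lam ∧ π v - π u = lam • h v u)
    (P : Finset (Fin d → ℝ)) (hP : P.card = Fintype.card V) :
    ∃ σ : V → (Fin d → ℝ), Function.Injective σ ∧ (∀ v, σ v ∈ P) ∧
      (∀ p ∈ P, ∃ v, σ v = p) ∧
      ∀ u v : V, 0 ≤ h v u ⬝ᵥ (σ v - σ u) := by
  classical
  have hne : Nonempty (V ≃ {x // x ∈ P}) :=
    ⟨(Fintype.equivOfCardEq (by simp [hP])).symm⟩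
  obtain ⟨τ, -, hmax⟩ := Finset.exists_max_image (Finset.univ : Finset (V ≃ {x // x ∈ P}))
    (fun τ => ∑ w, π w ⬝ᵥ ((τ w : Fin d → ℝ))) ⟨hne.some, Finset.mem_univ _⟩
  refine ⟨fun v => (τ v : Fin d → ℝ), ?_, fun v => (τ v).2, ?_, ?_⟩
  · exact fun a b hab => τ.injective (Subtype.coe_injective hab)
  · exact fun p hp => ⟨τ.symm ⟨p, hp⟩, by simp⟩
  · intro u v
    by_contra hneg
    push_neg at hneg
    have huv : u ≠ v := by rintro rfl; simp at hneg
    have hh : h v u ≠ 0 := by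
      intro h0; rw [h0] at hneg; simp at hneg
    have hh' : h u v ≠ 0 := by
      intro h0
      apply hh
      rw [hanti u v, h0, neg_zero]
    obtain ⟨lam, hlam, hvec⟩ := hdraw u v hh'
    set τ' := (Equiv.swap u v).trans τ with hτ'
    have hle := hmax τ' (Finset.mem_univ _)
    have hu : (τ' u : Fin d → ℝ) = τ v := by simp [hτ']
    have hv : (τ' v : Fin d → ℝ) = τ u := by simp [hτ']
    have key : (∑ w, π w ⬝ᵥ ((τ' w : Fin d → ℝ))) - (∑ w, π w ⬝ᵥ ((τ w : Fin d → ℝ)))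
        = (π v - π u) ⬝ᵥ ((τ u : Fin d → ℝ) - (τ v : Fin d → ℝ)) := by
      rw [← Finset.sum_sub_distrib]
      have hsub : ∑ w, (π w ⬝ᵥ ((τ' w : Fin d → ℝ)) - π w ⬝ᵥ ((τ w : Fin d → ℝ)))
          = ∑ w ∈ ({u, v} : Finset V),
            (π w ⬝ᵥ ((τ' w : Fin d → ℝ)) - π w ⬝ᵥ ((τ w : Fin d → ℝ))) := by
        refine (Finset.sum_subset (Finset.subset_univ _) ?_).symm
        intro w _ hw
        simp only [Finset.mem_insert, Finset.mem_singleton, not_or] at hw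
        have : (τ' w : Fin d → ℝ) = τ w := by
          simp [hτ', Equiv.swap_apply_of_ne_of_ne hw.1 hw.2]
        rw [this, sub_self]
      rw [hsub, Finset.sum_pair huv, hu, hv]
      simp only [dotProduct_sub, sub_dotProduct]
      ring
    have key2 : (π v - π u) ⬝ᵥ ((τ u : Fin d → ℝ) - (τ v : Fin d → ℝ))
        = lam * (-(h v u ⬝ᵥ ((τ v : Fin d → ℝ) - (τ u : Fin d → ℝ)))) := by
      rw [hvec, smul_dotProduct]
      congr 1
      simp only [dotProduct_sub]
      ring
    have hpos : 0 < (π v - π u) ⬝ᵥ ((τ u : Fin d → ℝ) - (τ v : Fin d → ℝ)) := by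
      rw [key2]
      exact mul_pos hlam (by linarith)
    linarith [key, hle]
end

section
/- Let (V, h) be a d-dimensional directional graph that is universally embeddable, and let L ⊆ ℝᵈ be a k-dimensional linear subspace with orthogonal projection p : ℝᵈ → L ≅ ℝᵏ. Then the projected directional graph (V, p ∘ h) is universally embeddable as a k-dimensional directional graph. -/
open scoped RealInnerProductSpace

/-- A `d`-dimensional directional graph `(V, h)` is universally embeddable if on every
point set of the right cardinality there is a bijective assignment satisfying all
the directional constraints. -/
def UniversallyEmbeddable {V : Type*} [Fintype V] {d : ℕ}
    (h : V → V → EuclideanSpace ℝ (Fin d)) : Prop :=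
  ∀ P : Finset (EuclideanSpace ℝ (Fin d)), P.card = Fintype.card V →
    ∃ σ : V → EuclideanSpace ℝ (Fin d), Function.Injective σ ∧ (∀ v, σ v ∈ P) ∧
      (∀ p ∈ P, ∃ v, σ v = p) ∧ ∀ u v : V, 0 ≤ ⟪h v u, σ v - σ u⟫

theorem stmt_12 {V : Type*} [Fintype V] {d k : ℕ}
    (h : V → V → EuclideanSpace ℝ (Fin d)) (hanti : ∀ u v, h v u = -h u v)
    (hUE : UniversallyEmbeddable h)
    (L : Submodule ℝ (EuclideanSpace ℝ (Fin d)))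
    (e : L ≃ₗᵢ[ℝ] EuclideanSpace ℝ (Fin k)) :
    UniversallyEmbeddable (fun v u => e (Submodule.orthogonalProjectionOnto L (h v u))) := by
  classical
  intro Q hQ
  -- lift the point set to L ⊆ ℝᵈ
  set f : EuclideanSpace ℝ (Fin k) → EuclideanSpace ℝ (Fin d) :=
    fun q => ((e.symm q : L) : EuclideanSpace ℝ (Fin d)) with hf
  have hfinj : Function.Injective f := by
    intro a b hab
    have : (e.symm a : L) = e.symm b := Subtype.ext hab
    simpa using congrArg e this
  set P : Finset (EuclideanSpace ℝ (Fin d)) := Q.image f with hP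
  have hPcard : P.card = Fintype.card V := by
    rw [hP, Finset.card_image_of_injective _ hfinj, hQ]
  obtain ⟨σ, hσinj, hσmem, hσsurj, hσdir⟩ := hUE P hPcard
  -- each σ v lies in L
  have hmemL : ∀ v, σ v ∈ L := by
    intro v
    obtain ⟨q, _, hq⟩ := Finset.mem_image.mp (hσmem v)
    rw [← hq]; exact (e.symm q).2
  refine ⟨fun v => e ⟨σ v, hmemL v⟩, ?_, ?_, ?_, ?_⟩
  · intro a b hab
    apply hσinj
    have := congrArg e.symm hab
    simp only [LinearIsometryEquiv.symm_apply_apply] at this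
    exact congrArg Subtype.val this
  · intro v
    obtain ⟨q, hqQ, hq⟩ := Finset.mem_image.mp (hσmem v)
    have h2 : (⟨σ v, hmemL v⟩ : L) = e.symm q := Subtype.ext hq.symm
    show e ⟨σ v, hmemL v⟩ ∈ Q
    rw [h2, LinearIsometryEquiv.apply_symm_apply]
    exact hqQ
  · intro q hqQ
    obtain ⟨v, hv⟩ := hσsurj (f q) (Finset.mem_image_of_mem f hqQ)
    refine ⟨v, ?_⟩
    have h2 : (⟨σ v, hmemL v⟩ : L) = e.symm q := Subtype.ext hv
    show e ⟨σ v, hmemL v⟩ = q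
    rw [h2, LinearIsometryEquiv.apply_symm_apply]
  · intro u v
    have key : (⟪e (Submodule.orthogonalProjectionOnto L (h v u)),
        e ⟨σ v, hmemL v⟩ - e ⟨σ u, hmemL u⟩⟫ : ℝ)
        = ⟪h v u, σ v - σ u⟫ := by
      rw [← map_sub, e.inner_map_map]
      have : (⟨σ v, hmemL v⟩ - ⟨σ u, hmemL u⟩ : L) = ⟨σ v - σ u, sub_mem (hmemL v) (hmemL u)⟩ :=
        rfl
      rw [this]
      rw [Submodule.inner_orthogonalProjectionOnto_eq_of_mem_right]
    rw [key]
    exact hσdir u v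
end

section
/- Let (V, h) be a directional graph containing a forcing cycle, i.e., vertices v_1,...,v_l, v_{l+1} = v_1 and a vector δ ∈ ℝᵈ with ⟨h(v_i, v_{i+1}), δ⟩ > 0 for all i ∈ [l]. Then (V, h) is not universally embeddable: there exists a finite point set P with |P| = |V| admitting no embedding of (V, h). -/
open scoped RealInnerProductSpace

theorem stmt_13 {V : Type*} [Fintype V] {d : ℕ}
    (h : V → V → EuclideanSpace ℝ (Fin d)) (hanti : ∀ u v, h v u = -h u v)
    (l : ℕ) [NeZero l] (c : Fin l → V) (δ : EuclideanSpace ℝ (Fin d))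
    (hforcing : ∀ i : Fin l, 0 < ⟪h (c i) (c (i + 1)), δ⟫) :
    ¬ UniversallyEmbeddable h := by
  intro hUE
  have hδ : δ ≠ 0 := by
    intro h0
    have := hforcing 0
    rw [h0] at this
    simp at this
  classical
  have hinj : Function.Injective (fun k : ℕ => (k : ℝ) • δ) := by
    intro a b hab
    have : (a : ℝ) = b := smul_left_injective ℝ hδ hab
    exact_mod_cast this
  obtain ⟨σ, hσinj, hσmem, hσsurj, hσcon⟩ :=
    hUE ((Finset.range (Fintype.card V)).image fun k : ℕ => (k : ℝ) • δ)
      (by rw [Finset.card_image_of_injective _ hinj, Finset.card_range])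
  have hcoef : ∀ v, ∃ k : ℕ, σ v = (k : ℝ) • δ := by
    intro v
    obtain ⟨k, -, hk⟩ := Finset.mem_image.mp (hσmem v)
    exact ⟨k, hk.symm⟩
  choose F hF using hcoef
  have key : ∀ i : Fin l, F (c (i + 1)) < F (c i) := by
    intro i
    have hpos := hforcing i
    have hcon := hσcon (c (i + 1)) (c i)
    rw [hF, hF, ← sub_smul, real_inner_smul_right] at hcon
    have hne : c i ≠ c (i + 1) := by
      intro he
      have hz : h (c i) (c (i + 1)) = 0 := by
        rw [← he]
        have h2 : h (c i) (c i) + h (c i) (c i) = 0 :=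
          add_eq_zero_iff_eq_neg.mpr (hanti (c i) (c i))
        rwa [← two_smul ℝ, smul_eq_zero, or_iff_right (two_ne_zero)] at h2
      rw [hz] at hpos
      simp at hpos
    have hle : (F (c (i + 1)) : ℝ) ≤ F (c i) := by
      by_contra hlt
      push_neg at hlt
      nlinarith
    have hne' : F (c (i + 1)) ≠ F (c i) := fun he =>
      hne (hσinj (by rw [hF, hF, he])).symm
    exact lt_of_le_of_ne (by exact_mod_cast hle) hne'
  obtain ⟨i0, -, hmin⟩ :=
    Finset.exists_min_image Finset.univ (fun i => F (c i)) ⟨0, Finset.mem_univ 0⟩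
  exact absurd (hmin (i0 + 1) (Finset.mem_univ _)) (not_le.mpr (key i0))
end

section
/- Let x ∈ ℝᵈ and let S, T ⊂ ℝᵈ be disjoint convex sets. The in-front relation from x is antisymmetric on {S, T}: it cannot happen that S is in front of T and T is in front of S with respect to x. -/
/-- `S` is in front of `T` with respect to `x`: there is an open halfline starting at `x`
meeting both sets such that every point of the halfline in `S` lies strictly between `x`
and any point of the halfline in `T`. -/
def InFront {d : ℕ} (x : EuclideanSpace ℝ (Fin d)) (S T : Set (EuclideanSpace ℝ (Fin d))) : Prop :=
  ∃ v : EuclideanSpace ℝ (Fin d), v ≠ 0 ∧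
    (∃ s : ℝ, 0 < s ∧ x + s • v ∈ S) ∧ (∃ t : ℝ, 0 < t ∧ x + t • v ∈ T) ∧
    ∀ s t : ℝ, 0 < s → 0 < t → x + s • v ∈ S → x + t • v ∈ T → s < t

theorem stmt_15 {d : ℕ} (x : EuclideanSpace ℝ (Fin d))
    (S T : Set (EuclideanSpace ℝ (Fin d)))
    (hS : Convex ℝ S) (hT : Convex ℝ T) (hdisj : Disjoint S T) :
    ¬ (InFront x S T ∧ InFront x T S) := by
  rintro ⟨⟨v, hv, ⟨s₁, hs₁, haS⟩, ⟨t₁, ht₁, hbT⟩, hord1⟩,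
          ⟨w, hw, ⟨τ, hτ, heT⟩, ⟨σ, hσ, hcS⟩, hord2⟩⟩
  have hst : s₁ < t₁ := hord1 s₁ t₁ hs₁ ht₁ haS hbT
  have hτσ : τ < σ := hord2 τ σ hτ hσ heT hcS
  set D : ℝ := σ * t₁ - τ * s₁ with hD
  have hDpos : 0 < D := by nlinarith
  set lam : ℝ := τ * (t₁ - s₁) / D with hlam
  set mu : ℝ := σ * (t₁ - s₁) / D with hmu
  have hlam0 : 0 ≤ lam := by
    apply div_nonneg _ hDpos.le
    nlinarith
  have hlam1 : lam ≤ 1 := by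
    rw [hlam, div_le_one hDpos]; nlinarith
  have hmu0 : 0 ≤ mu := by
    apply div_nonneg _ hDpos.le
    nlinarith
  have hmu1 : mu ≤ 1 := by
    rw [hmu, div_le_one hDpos]; nlinarith
  have hpS : (1 - lam) • (x + s₁ • v) + lam • (x + σ • w) ∈ S :=
    hS haS hcS (by linarith) hlam0 (by ring)
  have hpT : (1 - mu) • (x + t₁ • v) + mu • (x + τ • w) ∈ T :=
    hT hbT heT (by linarith) hmu0 (by ring)
  have e1 : (1 - lam) * s₁ = (1 - mu) * t₁ := by
    rw [hlam, hmu]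
    field_simp
    ring
  have e2 : lam * σ = mu * τ := by
    rw [hlam, hmu]
    field_simp
  have key : (1 - lam) • (x + s₁ • v) + lam • (x + σ • w)
      = (1 - mu) • (x + t₁ • v) + mu • (x + τ • w) := by
    match_scalars
    · ring
    · linear_combination e1
    · linear_combination e2
  exact Set.disjoint_left.mp hdisj hpS (key ▸ hpT)
end
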